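/- arXiv:2001.03358 — 3 statements merged into one kernel-verified Lean document; each statement's English description precedes it below -/
import Mathlib

section
/- For coprime nonzero integers p and q, the Dedekind symbol satisfies the reciprocity law S(p/q) + S(q/p) = p/q + q/p + 1/(pq) - 3*sgn(pq). -/
/-!
For coprime positive `h`, `k` the sawtooth values are explicit, and
`s(h,k) = k⁻² ∑_{r<k} r (hr mod k) - (k-1)/4`. Writing `hr mod k = hr - k⌊hr/k⌋` turns this into
the weighted floor sum `∑_{r<k} r ⌊hr/k⌋`. Counting the lattice points of `[0,k) × [0,h)` on either
side of the line `ks = hr` (by coprimality only the origin lies on it) expresses that sum through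
`∑_{s<h} ⌊ks/h⌋` and `∑_{s<h} ⌊ks/h⌋²`, and these lead back to `s(k,h)` because `s ↦ ks mod h`
permutes `[0,h)`. What remains is a polynomial identity in `h` and `k`; the general case follows
because `S` is odd in each argument.
-/

open scoped Classical

/-- The sawtooth function `((x))`. -/
noncomputable def sawtooth (x : ℝ) : ℝ :=
  if ∃ n : ℤ, x = (n : ℝ) then 0 else x - ⌊x⌋ - 1/2

/-- The Dedekind sum `s(p,q) = ∑_{k=1}^{|q|-1} ((k/q)) ((kp/q))`. -/
noncomputable def dedekindSum (p q : ℤ) : ℝ :=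
  ∑ k ∈ Finset.Icc 1 (q.natAbs - 1),
    sawtooth ((k : ℝ) / (q : ℝ)) * sawtooth ((k : ℝ) * (p : ℝ) / (q : ℝ))

/-- The Dedekind symbol `S(p/q) = 12 sgn(q) s(p,q)`. -/
noncomputable def dedekindSymbol (p q : ℤ) : ℝ :=
  12 * (q.sign : ℝ) * dedekindSum p q
open Finset

lemma sawtooth_eq_fract_sub_half {x : ℝ} (hx : ¬ ∃ n : ℤ, x = n) :
    sawtooth x = Int.fract x - 1 / 2 := by
  rw [sawtooth, if_neg hx, Int.self_sub_floor]

lemma sawtooth_neg (x : ℝ) : sawtooth (-x) = -sawtooth x := by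
  have hint : (∃ n : ℤ, -x = n) ↔ ∃ n : ℤ, x = n :=
    ⟨fun ⟨n, hn⟩ => ⟨-n, by push_cast; linarith⟩, fun ⟨n, hn⟩ => ⟨-n, by push_cast; linarith⟩⟩
  by_cases hx : ∃ n : ℤ, x = n
  · rw [sawtooth, sawtooth, if_pos (hint.mpr hx), if_pos hx, neg_zero]
  · have hfract : Int.fract x ≠ 0 := Int.fract_ne_zero_iff.mpr fun ⟨n, hn⟩ => hx ⟨n, hn.symm⟩
    rw [sawtooth_eq_fract_sub_half (hint.not.mpr hx), sawtooth_eq_fract_sub_half hx,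
      Int.fract_neg hfract]
    ring

lemma sawtooth_natCast_div {m k : ℕ} (hk : k ≠ 0) (hm : ¬ k ∣ m) :
    sawtooth ((m : ℝ) / k) = ((m % k : ℕ) : ℝ) / k - 1 / 2 := by
  have hnot : ¬ ∃ n : ℤ, (m : ℝ) / k = n := by
    rintro ⟨n, hn⟩
    rw [div_eq_iff (by positivity)] at hn
    exact hm (Int.natCast_dvd_natCast.mp ⟨n, by exact_mod_cast hn.trans (mul_comm _ _)⟩)
  rw [sawtooth_eq_fract_sub_half hnot, Int.fract_div_natCast_eq_div_natCast_mod]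

lemma dedekindSum_neg_left (p q : ℤ) : dedekindSum (-p) q = -dedekindSum p q := by
  simp only [dedekindSum, ← sum_neg_distrib, Int.cast_neg, mul_neg, neg_div, sawtooth_neg]

lemma dedekindSum_neg_right (p q : ℤ) : dedekindSum p (-q) = dedekindSum p q := by
  simp only [dedekindSum, Int.natAbs_neg, Int.cast_neg, div_neg, sawtooth_neg, neg_mul_neg]

lemma dedekindSymbol_neg_left (p q : ℤ) : dedekindSymbol (-p) q = -dedekindSymbol p q := by
  rw [dedekindSymbol, dedekindSymbol, dedekindSum_neg_left, mul_neg]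

lemma dedekindSymbol_neg_right (p q : ℤ) : dedekindSymbol p (-q) = -dedekindSymbol p q := by
  rw [dedekindSymbol, dedekindSymbol, dedekindSum_neg_right, Int.sign_neg, Int.cast_neg]
  ring

theorem Nat.Coprime.sum_range_mul_mod {M : Type*} [AddCommMonoid M] {h k : ℕ}
    (hco : h.Coprime k) (f : ℕ → M) :
    ∑ r ∈ range k, f (h * r % k) = ∑ r ∈ range k, f r := by
  refine sum_nbij (fun r => h * r % k) (fun r hr => ?_) (fun r hr r' hr' hrr' => ?_)
    (fun r hr => ?_) (fun _ _ => rfl)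
  · exact mem_range.mpr (Nat.mod_lt _ (Nat.zero_lt_of_lt (mem_range.mp hr)))
  · have := Nat.ModEq.cancel_left_of_coprime (hco.symm.gcd_eq_one) hrr'
    exact Nat.ModEq.eq_of_lt_of_lt this (mem_range.mp hr) (mem_range.mp hr')
  · obtain ⟨m, hm, hmr⟩ :=
      Nat.exists_mul_mod_eq_of_coprime r hco (Nat.ne_zero_of_lt (mem_range.mp hr))
    exact ⟨m, mem_range.mpr hm, hmr.trans (Nat.mod_eq_of_lt (mem_range.mp hr))⟩

lemma sum_range_natCast (n : ℕ) : ∑ i ∈ range n, (i : ℝ) = n * (n - 1) / 2 := by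
  induction n with
  | zero => simp
  | succ n ih => rw [sum_range_succ, ih]; push_cast; ring

lemma sum_range_natCast_sq (n : ℕ) :
    ∑ i ∈ range n, (i : ℝ) ^ 2 = n * (n - 1) * (2 * n - 1) / 6 := by
  induction n with
  | zero => simp
  | succ n ih => rw [sum_range_succ, ih]; push_cast; ring

lemma dedekindSum_natCast {h k : ℕ} (hk : k ≠ 0) (hco : h.Coprime k) :
    dedekindSum h k = (∑ r ∈ range k, (r : ℝ) * (h * r % k : ℕ)) / k ^ 2 - (k - 1) / 4 := by
  have hterm : ∀ r ∈ Icc 1 (k - 1), sawtooth ((r : ℝ) / (k : ℤ)) * sawtooth (r * (h : ℤ) / (k : ℤ))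
      = ((r : ℝ) / k - 1 / 2) * ((h * r % k : ℕ) / k - 1 / 2) := by
    intro r hr
    have hr' : ¬ k ∣ r := Nat.not_dvd_of_pos_of_lt (by grind) (by grind)
    have hhr : ¬ k ∣ h * r := fun hdvd => hr' (hco.symm.dvd_of_dvd_mul_left hdvd)
    rw [Int.cast_natCast, Int.cast_natCast, ← Nat.cast_mul, mul_comm r h,
      sawtooth_natCast_div hk hr', sawtooth_natCast_div hk hhr, Nat.mod_eq_of_lt (by grind)]
  have hIcc : Icc 1 (k - 1) = Ico 1 k := by ext; simp only [mem_Icc, mem_Ico]; omega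
  have hrange : ∑ r ∈ Icc 1 (k - 1), ((r : ℝ) / k - 1 / 2) * ((h * r % k : ℕ) / k - 1 / 2)
      = ∑ r ∈ range k, ((r : ℝ) / k - 1 / 2) * ((h * r % k : ℕ) / k - 1 / 2) - 1 / 4 := by
    rw [range_eq_Ico, sum_eq_sum_Ico_succ_bot (Nat.pos_of_ne_zero hk), hIcc]
    norm_num
  rw [dedekindSum, Int.natAbs_natCast, sum_congr rfl hterm, hrange]
  simp only [sub_mul, mul_sub, div_mul_div_comm, sum_sub_distrib, ← sum_div, ← sum_mul, ← mul_sum,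
    hco.sum_range_mul_mod (fun r => (r : ℝ)), sum_range_natCast, sum_const, card_range,
    nsmul_eq_mul]
  field_simp
  ring

lemma filter_range_mul_le_mul {h k r : ℕ} (hh : 0 < h) (hr : r < k) :
    (range h).filter (fun s => k * s ≤ h * r) = range (h * r / k + 1) := by
  have hk : 0 < k := by omega
  have hlt : h * r / k < h := Nat.div_lt_of_lt_mul (by rw [mul_comm k]; gcongr)
  ext s
  rw [mem_filter, mem_range, mem_range, Nat.lt_succ_iff, Nat.le_div_iff_mul_le hk, mul_comm k s]
  exact ⟨And.right, fun hs => ⟨((Nat.le_div_iff_mul_le hk).mpr hs).trans_lt hlt, hs⟩⟩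

lemma Nat.Coprime.sum_div_succ_smul_add_sum_sum_range {M : Type*} [AddCommMonoid M] {h k : ℕ}
    (hco : h.Coprime k) (hh : h ≠ 0) (hk : k ≠ 0) (f : ℕ → M) :
    ∑ r ∈ range k, (h * r / k + 1) • f r + ∑ s ∈ range h, ∑ r ∈ range (k * s / h + 1), f r
      = h • ∑ r ∈ range k, f r + f 0 := by
  have h0h : 0 ∈ range h := mem_range.mpr (Nat.pos_of_ne_zero hh)
  have h0k : 0 ∈ range k := mem_range.mpr (Nat.pos_of_ne_zero hk)
  have hdiag : ∀ r ∈ range k, ∀ s ∈ range h, h * r = k * s → r = 0 ∧ s = 0 := by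
    intro r hr s hs hrs
    have hr0 : r = 0 :=
      Nat.eq_zero_of_dvd_of_lt (hco.symm.dvd_of_dvd_mul_left ⟨s, hrs⟩) (mem_range.mp hr)
    subst hr0
    exact ⟨rfl, by simpa [hk] using hrs.symm⟩
  have hleft : ∀ r ∈ range k, (h * r / k + 1) • f r
      = ∑ s ∈ range h, if k * s ≤ h * r then f r else 0 := by
    intro r hr
    rw [← sum_filter, sum_const, filter_range_mul_le_mul (Nat.pos_of_ne_zero hh) (mem_range.mp hr),
      card_range]
  have hright : ∀ s ∈ range h, ∑ r ∈ range (k * s / h + 1), f r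
      = ∑ r ∈ range k, if h * r ≤ k * s then f r else 0 := by
    intro s hs
    rw [← sum_filter, filter_range_mul_le_mul (Nat.pos_of_ne_zero hk) (mem_range.mp hs)]
  have hsplit : ∀ r s, ((if k * s ≤ h * r then f r else 0) + if h * r ≤ k * s then f r else 0)
      = f r + if h * r = k * s then f r else 0 := by
    intro r s
    split_ifs <;> first | omega | simp [add_comm]
  rw [sum_congr rfl hleft, sum_congr rfl hright, sum_comm (s := range h), ← sum_add_distrib]
  simp only [← sum_add_distrib, hsplit]
  simp only [sum_add_distrib, sum_const, card_range, ← smul_sum]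
  congr 1
  rw [sum_eq_single_of_mem 0 h0k fun r hr hr0 =>
      sum_eq_zero fun s hs => if_neg fun hrs => hr0 (hdiag r hr s hs hrs).1,
    sum_eq_single_of_mem 0 h0h fun s hs hs0 => if_neg fun hrs => hs0 (hdiag 0 h0k s hs hrs).2]
  simp

lemma natCast_mul_eq_mod_add_mul_div (h r k : ℕ) :
    (h : ℝ) * r = (h * r % k : ℕ) + k * (h * r / k : ℕ) := by
  exact_mod_cast (Nat.mod_add_div (h * r) k).symm

lemma sum_mul_mod_add_mul_sum_mul_div (s : Finset ℕ) (h k : ℕ) :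
    ∑ r ∈ s, (r : ℝ) * (h * r % k : ℕ) + k * ∑ r ∈ s, (r : ℝ) * (h * r / k : ℕ)
      = h * ∑ r ∈ s, (r : ℝ) ^ 2 := by
  simp only [mul_sum, ← sum_add_distrib]
  exact sum_congr rfl fun r _ => by
    linear_combination -(r : ℝ) * natCast_mul_eq_mod_add_mul_div h r k

lemma Nat.Coprime.mul_sum_range_div {h k : ℕ} (hco : h.Coprime k) :
    k * ∑ r ∈ range k, ((h * r / k : ℕ) : ℝ) = (h - 1) * (k * (k - 1) / 2) := by
  have hdiv : ∀ r ∈ range k, (k : ℝ) * (h * r / k : ℕ) = h * r - (h * r % k : ℕ) := fun r _ => by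
    linear_combination -natCast_mul_eq_mod_add_mul_div h r k
  rw [mul_sum, sum_congr rfl hdiv, sum_sub_distrib, ← mul_sum,
    hco.sum_range_mul_mod (fun r => (r : ℝ)), sum_range_natCast]
  ring

lemma Nat.Coprime.sq_mul_sum_range_div_sq {h k : ℕ} (hco : h.Coprime k) :
    k ^ 2 * ∑ r ∈ range k, ((h * r / k : ℕ) : ℝ) ^ 2
        + 2 * h * ∑ r ∈ range k, (r : ℝ) * (h * r % k : ℕ)
      = (h ^ 2 + 1) * (k * (k - 1) * (2 * k - 1) / 6) := by
  have hdiv : ∀ r ∈ range k, (k : ℝ) ^ 2 * (h * r / k : ℕ) ^ 2 + 2 * h * (r * (h * r % k : ℕ))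
      = h ^ 2 * r ^ 2 + (h * r % k : ℕ) ^ 2 := fun r _ => by
    linear_combination ((h * r % k : ℕ) - h * r - k * (h * r / k : ℕ) : ℝ) *
      natCast_mul_eq_mod_add_mul_div h r k
  rw [mul_sum, mul_sum, ← sum_add_distrib, sum_congr rfl hdiv, sum_add_distrib, ← mul_sum,
    hco.sum_range_mul_mod (fun r => (r : ℝ) ^ 2), sum_range_natCast_sq]
  ring

lemma Nat.Coprime.sum_mul_div_add_sum_range_div {h k : ℕ} (hco : h.Coprime k) (hh : h ≠ 0)
    (hk : k ≠ 0) :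
    ∑ r ∈ range k, (r : ℝ) * (h * r / k : ℕ)
      + (∑ s ∈ range h, ((k * s / h : ℕ) : ℝ) ^ 2 + ∑ s ∈ range h, ((k * s / h : ℕ) : ℝ)) / 2
      = (h - 1) * (k * (k - 1) / 2) := by
  have hcount := hco.sum_div_succ_smul_add_sum_sum_range hh hk (fun r => (r : ℝ))
  simp only [nsmul_eq_mul, sum_range_natCast] at hcount
  push_cast at hcount
  have hleft : ∑ r ∈ range k, (((h * r / k : ℕ) : ℝ) + 1) * r
      = ∑ r ∈ range k, (r : ℝ) * (h * r / k : ℕ) + k * (k - 1) / 2 := by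
    rw [← sum_range_natCast, ← sum_add_distrib]
    exact sum_congr rfl fun _ _ => by ring
  have hright : ∑ s ∈ range h, (((k * s / h : ℕ) : ℝ) + 1) * ((k * s / h : ℕ) + 1 - 1) / 2
      = (∑ s ∈ range h, ((k * s / h : ℕ) : ℝ) ^ 2 + ∑ s ∈ range h, ((k * s / h : ℕ) : ℝ)) / 2 := by
    rw [← sum_add_distrib, sum_div]
    exact sum_congr rfl fun _ _ => by ring
  linarith

theorem dedekindSum_add_dedekindSum_natCast {h k : ℕ} (hh : h ≠ 0) (hk : k ≠ 0)
    (hco : h.Coprime k) :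
    12 * h * k * (dedekindSum h k + dedekindSum k h) = h ^ 2 + k ^ 2 + 1 - 3 * h * k := by
  have hsum := sum_mul_mod_add_mul_sum_mul_div (range k) h k
  have hlattice := hco.sum_mul_div_add_sum_range_div hh hk
  have hfloor := hco.symm.mul_sum_range_div
  have hfloor_sq := hco.symm.sq_mul_sum_range_div_sq
  rw [sum_range_natCast_sq] at hsum
  rw [dedekindSum_natCast hk hco, dedekindSum_natCast hh hco.symm]
  field_simp
  linear_combination 48 * h ^ 2 * hsum - 48 * h ^ 2 * k * hlattice + 24 * k * hfloor_sq
    + 24 * h * k * hfloor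

theorem dedekindSymbol_add_dedekindSymbol_natCast {a b : ℕ} (ha : a ≠ 0) (hb : b ≠ 0)
    (hco : a.Coprime b) :
    dedekindSymbol a b + dedekindSymbol b a = a / b + b / a + 1 / (a * b) - 3 := by
  rw [dedekindSymbol, dedekindSymbol, Int.sign_natCast_of_ne_zero hb,
    Int.sign_natCast_of_ne_zero ha]
  field_simp
  linear_combination dedekindSum_add_dedekindSum_natCast ha hb hco

/-- Reciprocity law for Dedekind symbols:
`S(p/q) + S(q/p) = p/q + q/p + 1/(pq) - 3 sgn(pq)`. -/
theorem dedekindSymbol_reciprocity (p q : ℤ) (hp : p ≠ 0) (hq : q ≠ 0)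
    (hpq : IsCoprime p q) :
    dedekindSymbol p q + dedekindSymbol q p =
      (p : ℝ) / (q : ℝ) + (q : ℝ) / (p : ℝ) + 1 / ((p : ℝ) * (q : ℝ))
        - 3 * ((p * q).sign : ℝ) := by
  obtain ⟨a, rfl | rfl⟩ := Int.eq_nat_or_neg p <;> obtain ⟨b, rfl | rfl⟩ := Int.eq_nat_or_neg q <;>
    simp only [neg_ne_zero, Nat.cast_ne_zero, IsCoprime.neg_left_iff, IsCoprime.neg_right_iff,
      Nat.isCoprime_iff_coprime] at hp hq hpq <;>
    simp only [dedekindSymbol_neg_left, dedekindSymbol_neg_right, neg_mul, mul_neg, neg_neg,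
      Int.sign_neg, Int.sign_mul, Int.sign_natCast_of_ne_zero hp, Int.sign_natCast_of_ne_zero hq,
      Int.cast_neg] <;>
    [linear_combination dedekindSymbol_add_dedekindSymbol_natCast hp hq hpq;
     linear_combination -dedekindSymbol_add_dedekindSymbol_natCast hp hq hpq;
     linear_combination -dedekindSymbol_add_dedekindSymbol_natCast hp hq hpq;
     linear_combination dedekindSymbol_add_dedekindSymbol_natCast hp hq hpq]
end

section
/- Let c_1,...,c_l be real numbers with associated 2x2 matrix [[alpha, beta],[gamma, delta]] = [[0,-1],[1,0]] * [[c_1,-1],[1,0]] * ... * [[c_l,-1],[1,0]], and assume gamma is nonzero. Then the tridiagonal matrix Lambda(c_1,...,c_l) is invertible and its inverse has top-left entry -alpha/gamma, bottom-right entry -delta/gamma, and top-right and bottom-left entries both equal to (-1)^{l+1}/gamma. -/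
open scoped Classical

/-- The `l × l` symmetric tridiagonal matrix with diagonal entries `c 0, ..., c (l-1)`
and sub/super-diagonal entries `1`. -/
def tridiag {l : ℕ} (c : Fin l → ℝ) : Matrix (Fin l) (Fin l) ℝ :=
  Matrix.of fun i j =>
    if i = j then c i else if (i : ℕ) + 1 = (j : ℕ) ∨ (j : ℕ) + 1 = (i : ℕ) then 1 else 0

/-- The associated `2 × 2` matrix
`A(c_1,...,c_l) = [[0,-1],[1,0]] * [[c_1,-1],[1,0]] * ⋯ * [[c_l,-1],[1,0]]`. -/
def assocMat {l : ℕ} (c : Fin l → ℝ) : Matrix (Fin 2) (Fin 2) ℝ :=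
  !![0, -1; 1, 0] * (List.ofFn fun i => !![c i, -1; 1, 0]).prod

/-- The signature of a real symmetric matrix: the number of positive eigenvalues
minus the number of negative eigenvalues. -/
noncomputable def signature {n : Type*} [Fintype n] [DecidableEq n]
    (M : Matrix n n ℝ) : ℤ :=
  if hM : M.IsHermitian then
    ((Finset.univ.filter fun i => 0 < hM.eigenvalues i).card : ℤ)
      - ((Finset.univ.filter fun i => hM.eigenvalues i < 0).card : ℤ)
  else 0

/-! The entries of `continuantMat c = ∏ᵢ [[cᵢ, -1], [1, 0]]` are continuants, i.e. determinants
of tridiagonal matrices: expanding `det Λ(c₁, …, c_l)` along its first row gives the three-term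
recurrence satisfied by the top-left entry, so `γ = det Λ(c₁, …, c_l)`,
`α = -det Λ(c₂, …, c_l)` and `δ = -det Λ(c₁, …, c_{l-1})`. In `Λ⁻¹ = adj Λ / det Λ` the two
diagonal corners are these principal minors, and the off-diagonal corner cofactor is the
determinant of a unitriangular matrix. -/

open Matrix

def continuantMat {l : ℕ} (c : Fin l → ℝ) : Matrix (Fin 2) (Fin 2) ℝ :=
  (List.ofFn fun i => !![c i, -1; 1, 0]).prod

lemma continuantMat_zero (c : Fin 0 → ℝ) : continuantMat c = 1 := by
  simp [continuantMat]

lemma continuantMat_eq_mul_tail {l : ℕ} (c : Fin (l + 1) → ℝ) :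
    continuantMat c = !![c 0, -1; 1, 0] * continuantMat (Fin.tail c) := by
  simp [continuantMat, List.ofFn_succ, Fin.tail]

lemma continuantMat_eq_init_mul {l : ℕ} (c : Fin (l + 1) → ℝ) :
    continuantMat c = continuantMat (Fin.init c) * !![c (Fin.last l), -1; 1, 0] := by
  rw [continuantMat, List.ofFn_succ', List.concat_eq_append, List.prod_append,
    List.prod_singleton]
  rfl

lemma continuantMat_succ_zero_zero {l : ℕ} (c : Fin (l + 1) → ℝ) :
    continuantMat c 0 0 =
      c 0 * continuantMat (Fin.tail c) 0 0 - continuantMat (Fin.tail c) 1 0 := by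
  simp [continuantMat_eq_mul_tail c, mul_apply, Fin.sum_univ_two, sub_eq_add_neg]

lemma continuantMat_succ_one_zero {l : ℕ} (c : Fin (l + 1) → ℝ) :
    continuantMat c 1 0 = continuantMat (Fin.tail c) 0 0 := by
  simp [continuantMat_eq_mul_tail c, mul_apply, Fin.sum_univ_two]

lemma continuantMat_succ_zero_one {l : ℕ} (c : Fin (l + 1) → ℝ) :
    continuantMat c 0 1 = -continuantMat (Fin.init c) 0 0 := by
  simp [continuantMat_eq_init_mul c, mul_apply, Fin.sum_univ_two]

lemma assocMat_eq_mul_continuantMat {l : ℕ} (c : Fin l → ℝ) :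
    assocMat c = !![0, -1; 1, 0] * continuantMat c := rfl

lemma tridiag_apply {l : ℕ} (c : Fin l → ℝ) (i j : Fin l) :
    tridiag c i j = if (i : ℕ) = j then c i
      else if (i : ℕ) + 1 = j ∨ (j : ℕ) + 1 = i then 1 else 0 := by
  simp [tridiag, Fin.ext_iff]

lemma tridiag_isSymm {l : ℕ} (c : Fin l → ℝ) : (tridiag c).IsSymm := by
  ext i j
  by_cases h : i = j
  · subst h; rfl
  · simp [tridiag, h, Ne.symm h, or_comm]

lemma tridiag_submatrix_succ {l : ℕ} (c : Fin (l + 1) → ℝ) :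
    (tridiag c).submatrix Fin.succ Fin.succ = tridiag (Fin.tail c) := by
  ext i j
  simp only [submatrix_apply, tridiag_apply, Fin.val_succ, Fin.tail]
  split_ifs <;> first | rfl | omega

lemma tridiag_submatrix_castSucc {l : ℕ} (c : Fin (l + 1) → ℝ) :
    (tridiag c).submatrix Fin.castSucc Fin.castSucc = tridiag (Fin.init c) := by
  ext i j
  simp only [submatrix_apply, tridiag_apply, Fin.val_castSucc, Fin.init]

-- This minor has first column `e₀`; expanding along it leaves `Λ(c₃, …, c_l)`.
lemma det_tridiag_submatrix_succ_succAbove_one {l : ℕ} (c : Fin (l + 2) → ℝ) :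
    ((tridiag c).submatrix Fin.succ (Fin.succAbove 1)).det =
      (tridiag (Fin.tail (Fin.tail c))).det := by
  rw [det_succ_column_zero, Fin.sum_univ_succ]
  have hminor : ((tridiag c).submatrix Fin.succ (Fin.succAbove 1)).submatrix Fin.succ Fin.succ =
      tridiag (Fin.tail (Fin.tail c)) := by
    ext i j
    simp [tridiag_apply, Fin.succAbove, Fin.lt_def, Fin.tail]
  simp [hminor, tridiag_apply, Fin.succAbove]

lemma det_tridiag_succ_succ {l : ℕ} (c : Fin (l + 2) → ℝ) :
    (tridiag c).det =
      c 0 * (tridiag (Fin.tail c)).det - (tridiag (Fin.tail (Fin.tail c))).det := by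
  rw [det_succ_row_zero, Fin.sum_univ_succ, Fin.sum_univ_succ]
  have hrow : ∀ j : Fin l, tridiag c 0 j.succ.succ = 0 := by
    intro j
    simp [tridiag_apply]
  simp [hrow, Fin.succAbove_zero, tridiag_submatrix_succ, det_tridiag_submatrix_succ_succAbove_one,
    tridiag_apply, sub_eq_add_neg]

lemma det_tridiag {l : ℕ} (c : Fin l → ℝ) : (tridiag c).det = continuantMat c 0 0 := by
  induction l using Nat.twoStepInduction with
  | zero => simp [continuantMat_zero]
  | one => simp [continuantMat, tridiag_apply]
  | more l ih₀ ih₁ =>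
    rw [det_tridiag_succ_succ, ih₁, ih₀, continuantMat_succ_zero_zero c,
      continuantMat_succ_one_zero (Fin.tail c)]

lemma assocMat_one_zero {l : ℕ} (c : Fin l → ℝ) : assocMat c 1 0 = (tridiag c).det := by
  simp [assocMat_eq_mul_continuantMat, det_tridiag, mul_apply, Fin.sum_univ_two]

lemma assocMat_zero_zero {l : ℕ} (c : Fin (l + 1) → ℝ) :
    assocMat c 0 0 = -(tridiag (Fin.tail c)).det := by
  simp [assocMat_eq_mul_continuantMat, continuantMat_succ_one_zero, det_tridiag, mul_apply,
    Fin.sum_univ_two]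

lemma assocMat_one_one {l : ℕ} (c : Fin (l + 1) → ℝ) :
    assocMat c 1 1 = -(tridiag (Fin.init c)).det := by
  simp [assocMat_eq_mul_continuantMat, continuantMat_succ_zero_one, det_tridiag, mul_apply,
    Fin.sum_univ_two]

lemma adjugate_tridiag_zero_zero {l : ℕ} (c : Fin (l + 1) → ℝ) :
    (tridiag c).adjugate 0 0 = (tridiag (Fin.tail c)).det := by
  simp [adjugate_fin_succ_eq_det_submatrix, Fin.succAbove_zero, tridiag_submatrix_succ]

lemma adjugate_tridiag_last_last {l : ℕ} (c : Fin (l + 1) → ℝ) :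
    (tridiag c).adjugate (Fin.last l) (Fin.last l) = (tridiag (Fin.init c)).det := by
  simp [adjugate_fin_succ_eq_det_submatrix, Fin.succAbove_last, tridiag_submatrix_castSucc]

lemma det_tridiag_submatrix_castSucc_succ {l : ℕ} (c : Fin (l + 1) → ℝ) :
    ((tridiag c).submatrix Fin.castSucc Fin.succ).det = 1 := by
  rw [det_of_isLowerTriangular]
  · simp [tridiag_apply]
  · intro i j hij
    simp only [submatrix_apply, tridiag_apply, Fin.val_castSucc, Fin.val_succ]
    rw [OrderDual.toDual_lt_toDual, Fin.lt_def] at hij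
    split_ifs <;> first | rfl | omega

lemma adjugate_tridiag_zero_last {l : ℕ} (c : Fin (l + 1) → ℝ) :
    (tridiag c).adjugate 0 (Fin.last l) = (-1) ^ l := by
  simp [adjugate_fin_succ_eq_det_submatrix, Fin.succAbove_last, Fin.succAbove_zero,
    det_tridiag_submatrix_castSucc_succ]

/-- Corners of the inverse of a tridiagonal matrix (Bar-Natan & Lawrence):
if the bottom-left entry `γ` of the associated `2 × 2` matrix
`[[α,β],[γ,δ]]` is nonzero, then `Λ(c_1,...,c_l)` is invertible and its
inverse has corners `-α/γ` (top-left), `-δ/γ` (bottom-right) and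
`(-1)^(l+1)/γ` (top-right and bottom-left). -/
theorem tridiag_inv_corners {l : ℕ} (hl : 0 < l) (c : Fin l → ℝ)
    (hγ : assocMat c 1 0 ≠ 0) :
    IsUnit (tridiag c) ∧
    (tridiag c)⁻¹ ⟨0, hl⟩ ⟨0, hl⟩ = -(assocMat c 0 0) / assocMat c 1 0 ∧
    (tridiag c)⁻¹ ⟨l - 1, by omega⟩ ⟨l - 1, by omega⟩ =
      -(assocMat c 1 1) / assocMat c 1 0 ∧
    (tridiag c)⁻¹ ⟨0, hl⟩ ⟨l - 1, by omega⟩ = (-1) ^ (l + 1) / assocMat c 1 0 ∧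
    (tridiag c)⁻¹ ⟨l - 1, by omega⟩ ⟨0, hl⟩ = (-1) ^ (l + 1) / assocMat c 1 0 := by
  obtain ⟨m, rfl⟩ : ∃ m, l = m + 1 := ⟨l - 1, by omega⟩
  have h0 : (⟨0, hl⟩ : Fin (m + 1)) = 0 := rfl
  have hlast : (⟨m + 1 - 1, by omega⟩ : Fin (m + 1)) = Fin.last m := rfl
  rw [h0, hlast, assocMat_one_zero]
  rw [assocMat_one_zero] at hγ
  have hinv : ∀ i j, (tridiag c)⁻¹ i j = (tridiag c).adjugate i j / (tridiag c).det := by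
    intro i j
    simp [inv_def, Ring.inverse_eq_inv', div_eq_inv_mul]
  have hsymm : (tridiag c)⁻¹ (Fin.last m) 0 = (tridiag c)⁻¹ 0 (Fin.last m) :=
    (tridiag_isSymm c).inv.apply _ _
  refine ⟨(isUnit_iff_isUnit_det _).mpr hγ.isUnit, ?_, ?_, ?_, ?_⟩
  · rw [hinv, adjugate_tridiag_zero_zero, assocMat_zero_zero, neg_neg]
  · rw [hinv, adjugate_tridiag_last_last, assocMat_one_one, neg_neg]
  · rw [hinv, adjugate_tridiag_zero_last]; simp [pow_succ]
  · rw [hsymm, hinv, adjugate_tridiag_zero_last]; simp [pow_succ]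
end

section
/- Let Delta(t) be a Laurent polynomial over Q with Delta(t^{-1}) = Delta(t), Delta(1) = 1, related to nabla(z) = 1 + a_2 z^2 + a_4 z^4 + (higher even terms) by nabla(t - t^{-1}) = Delta(t^2). Then the power series expansion of Delta(e^h) in Q[[h]] is 1 + a_2 h^2 + (a_2/12 + a_4) h^4 + O(h^6), and consequently log(Delta(e^h)) = a_2 h^2 + (a_2/12 - a_2^2/2 + a_4) h^4 + O(h^6). -/
open PowerSeries

/-- The function `ℝ → ℝ` associated to a Laurent polynomial with rational
coefficients `d : ℤ →₀ ℚ`, namely `t ↦ ∑_n d_n t^n`. -/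
noncomputable def laurentEval (d : ℤ →₀ ℚ) (t : ℝ) : ℝ :=
  d.sum fun n c => (c : ℝ) * t ^ n

/-- The formal power series `Δ(e^h) = ∑_n d_n e^(n h) ∈ ℚ⟦h⟧` associated to a
Laurent polynomial `Δ(t) = ∑_n d_n t^n` with `d : ℤ →₀ ℚ`. -/
noncomputable def laurentExpSeries (d : ℤ →₀ ℚ) : PowerSeries ℚ :=
  d.sum fun n c => PowerSeries.mk fun k => c * (n : ℚ) ^ k / (Nat.factorial k : ℚ)

/-- The formal logarithm of a power series with constant term `1`:
`log f = ∑_{k ≥ 1} (-1)^(k+1) (f-1)^k / k`. -/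
noncomputable def formalLog (f : PowerSeries ℚ) : PowerSeries ℚ :=
  PowerSeries.mk fun n =>
    ∑ k ∈ Finset.Icc 1 n, ((-1 : ℚ) ^ (k + 1) / (k : ℚ)) *
      PowerSeries.coeff n ((f - 1) ^ k)

/-!
Substituting `t = e^{h/2}` in `∇(t - t⁻¹) = Δ(t²)` gives `Δ(e^h) = ∇(z)` with
`z = e^{h/2} - e^{-h/2}`. The real identity transfers to `ℚ⟦h⟧` because it is an identity of
Laurent polynomials: it holds at infinitely many points. As `∇` is even and
`z² = e^h + e^{-h} - 2 ≡ h² + h⁴/12` modulo `h⁶`, we get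
`Δ(e^h) ≡ 1 + a₂ (h² + h⁴/12) + a₄ h⁴`; finally `log (1 + g) ≡ g - g²/2` modulo `h⁶`
whenever `h² ∣ g`.
-/

open scoped LaurentPolynomial

namespace LaurentPolynomial

theorem eq_zero_of_forall_eval₂_eq_zero {R K : Type*} [CommSemiring R] [Field K] [Infinite K]
    {φ : R →+* K} (hφ : Function.Injective φ) {f : R[T;T⁻¹]}
    (h : ∀ x : Kˣ, eval₂ φ x f = 0) : f = 0 := by
  obtain ⟨n, f', hf'⟩ := exists_T_pow f
  have hroots : {0}ᶜ ⊆ {x | (f'.map φ).IsRoot x} := fun x hx => by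
    have hx : x ≠ 0 := hx
    simpa [hf', h, Polynomial.eval_map] using (eval₂_toLaurent φ (Units.mk0 x hx) f').symm
  have hf'0 : f' = 0 := by
    rw [← Polynomial.map_eq_zero_iff hφ]
    exact Polynomial.eq_zero_of_infinite_isRoot _
      ((Set.finite_singleton 0).infinite_compl.mono hroots)
  rw [hf'0, map_zero] at hf'
  exact (isUnit_T n).mul_left_eq_zero.mp hf'.symm

variable {A : Type*} [CommRing A] [Algebra ℚ A]

theorem eval₂_aeval_T_sub_T_neg (N : Polynomial ℚ) (u : Aˣ) :
    eval₂ (algebraMap ℚ A) u (Polynomial.aeval (T 1 - T (-1)) N) =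
      Polynomial.aeval (↑u - ↑u⁻¹ : A) N := by
  have h := Polynomial.aeval_algHom_apply (eval₂ (algebraMap ℚ A) u).toRatAlgHom (T 1 - T (-1)) N
  rw [RingHom.toRatAlgHom_apply, RingHom.toRatAlgHom_apply] at h
  simp [← h]

theorem eval₂_sum_C_mul_T_two_mul (d : ℤ →₀ ℚ) (u : Aˣ) :
    eval₂ (algebraMap ℚ A) u (d.sum fun n c => C c * T (2 * n)) =
      d.sum fun n c => algebraMap ℚ A c * ↑(u ^ (2 * n)) := by
  simp [map_finsuppSum]

end LaurentPolynomial

open LaurentPolynomial in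
theorem aeval_T_sub_T_neg_eq_of_forall_real (d : ℤ →₀ ℚ) (N : Polynomial ℚ)
    (hconv : ∀ t : ℝ, t ≠ 0 →
      (N.map (algebraMap ℚ ℝ)).eval (t - t⁻¹) = laurentEval d (t ^ 2)) :
    Polynomial.aeval (T 1 - T (-1) : ℚ[T;T⁻¹]) N =
      d.sum fun n c => LaurentPolynomial.C c * T (2 * n) := by
  rw [← sub_eq_zero]
  refine eq_zero_of_forall_eval₂_eq_zero (algebraMap ℚ ℝ).injective fun u => ?_
  rw [map_sub, eval₂_aeval_T_sub_T_neg, eval₂_sum_C_mul_T_two_mul,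
    ← Polynomial.eval_map_algebraMap, Units.val_inv_eq_inv_val, hconv u u.ne_zero, laurentEval,
    sub_eq_zero]
  refine Finsupp.sum_congr fun n _ => ?_
  simp [zpow_mul]

namespace PowerSeries

variable (A : Type*) [CommRing A] [Algebra ℚ A]

noncomputable def expUnit (a : A) : A⟦X⟧ˣ where
  val := rescale a (exp A)
  inv := rescale (-a) (exp A)
  val_inv := by rw [exp_mul_exp_eq_exp_add, add_neg_cancel]; simp
  inv_val := by rw [exp_mul_exp_eq_exp_add, neg_add_cancel]; simp

theorem expUnit_zpow (a : A) (m : ℤ) : expUnit A a ^ m = expUnit A (m * a) := by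
  induction m using Int.induction_on with
  | zero => ext1; simp [expUnit]
  | succ m ih =>
    ext1
    rw [zpow_add_one, ih, Units.val_mul]
    simp only [expUnit, exp_mul_exp_eq_exp_add]
    congr 2; push_cast; ring
  | pred m ih =>
    ext1
    rw [zpow_sub_one, ih, Units.val_mul]
    simp only [expUnit, Units.inv_mk, exp_mul_exp_eq_exp_add]
    congr 2; push_cast; ring

theorem coeff_rescale_exp (a : ℚ) (k : ℕ) :
    coeff k (rescale a (exp ℚ)) = a ^ k / k.factorial := by
  simp [coeff_rescale, coeff_exp, div_eq_mul_inv]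

variable {R : Type*} [CommRing R] {n : ℕ}

theorem mk_span_X_pow_eq_iff {f g : R⟦X⟧} :
    Ideal.Quotient.mk (Ideal.span {X ^ n}) f = Ideal.Quotient.mk _ g ↔
      ∀ m < n, coeff m f = coeff m g := by
  simp only [Ideal.Quotient.mk_eq_mk_iff_sub_mem, Ideal.mem_span_singleton, X_pow_dvd_iff,
    map_sub, sub_eq_zero]

end PowerSeries

theorem Polynomial.aeval_eq_sum_range_of_pow_eq_zero {R A : Type*} [CommSemiring R] [Semiring A]
    [Algebra R A] (p : Polynomial R) {y : A} {n : ℕ} (hy : y ^ n = 0) :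
    aeval y p = ∑ i ∈ Finset.range n, p.coeff i • y ^ i := by
  rw [aeval_eq_sum_range' (Nat.lt_succ_of_le (le_max_left p.natDegree n))]
  refine (Finset.sum_subset (Finset.range_subset_range.2 (by omega)) fun i _ hi => ?_).symm
  rw [pow_eq_zero_of_le (by simpa using hi) hy, smul_zero]

theorem laurentExpSeries_eq_sum (d : ℤ →₀ ℚ) :
    laurentExpSeries d = d.sum fun n c => C c * rescale (n : ℚ) (exp ℚ) := by
  ext k
  simp [laurentExpSeries, map_finsuppSum, div_eq_mul_inv, mul_assoc]

theorem laurentExpSeries_eq_aeval (d : ℤ →₀ ℚ) (N : Polynomial ℚ)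
    (hconv : ∀ t : ℝ, t ≠ 0 →
      (N.map (algebraMap ℚ ℝ)).eval (t - t⁻¹) = laurentEval d (t ^ 2)) :
    laurentExpSeries d =
      Polynomial.aeval (↑(expUnit ℚ (1 / 2)) - ↑(expUnit ℚ (1 / 2))⁻¹ : ℚ⟦X⟧) N := by
  rw [← LaurentPolynomial.eval₂_aeval_T_sub_T_neg, aeval_T_sub_T_neg_eq_of_forall_real d N hconv,
    LaurentPolynomial.eval₂_sum_C_mul_T_two_mul, laurentExpSeries_eq_sum]
  refine Finsupp.sum_congr fun n _ => ?_
  rw [expUnit_zpow, show ((2 * n : ℤ) : ℚ) * (1 / 2) = n by push_cast; ring]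
  simp [expUnit]

theorem mk_formalLog {f : ℚ⟦X⟧} (hf : constantCoeff f = 1) (n : ℕ) :
    Ideal.Quotient.mk (Ideal.span {X ^ (n + 1)}) (formalLog f) =
      Ideal.Quotient.mk _ (∑ k ∈ Finset.Icc 1 n, C ((-1 : ℚ) ^ (k + 1) / k) * (f - 1) ^ k) := by
  refine mk_span_X_pow_eq_iff.2 fun m hm => ?_
  have hX : X ∣ f - 1 := X_dvd_iff.2 (by simp [hf])
  rw [formalLog, coeff_mk, map_sum]
  simp only [coeff_C_mul]
  refine Finset.sum_subset (Finset.Icc_subset_Icc_right (by omega)) fun k hk hkm => ?_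
  have hmk : m < k := by simp only [Finset.mem_Icc, not_and, not_le] at hk hkm; omega
  rw [X_pow_dvd_iff.1 (pow_dvd_pow_of_dvd hX k) m hmk, mul_zero]

local notation "π₆" => Ideal.Quotient.mk (Ideal.span {(X : ℚ⟦X⟧) ^ 6})

theorem coeff_eq_of_mk_eq {f : ℚ⟦X⟧} {c a b : ℚ}
    (h : π₆ f = π₆ (C c + C a * X ^ 2 + C b * X ^ 4)) :
    coeff 0 f = c ∧ coeff 1 f = 0 ∧ coeff 2 f = a ∧ coeff 3 f = 0 ∧ coeff 4 f = b ∧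
      coeff 5 f = 0 := by
  have hc := mk_span_X_pow_eq_iff.1 h
  refine ⟨?_, ?_, ?_, ?_, ?_, ?_⟩ <;> rw [hc _ (by norm_num)] <;> simp [coeff_X_pow]

theorem mk_sq_expUnit_sub_inv :
    π₆ ((↑(expUnit ℚ (1 / 2)) - ↑(expUnit ℚ (1 / 2))⁻¹) ^ 2) =
      π₆ (X ^ 2 + C (1 / 12) * X ^ 4) := by
  have h₁ : rescale (1 / 2 : ℚ) (exp ℚ) * rescale (1 / 2) (exp ℚ) = rescale 1 (exp ℚ) := by
    rw [exp_mul_exp_eq_exp_add]; norm_num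
  have h₂ : rescale (-(1 / 2) : ℚ) (exp ℚ) * rescale (-(1 / 2)) (exp ℚ) =
      rescale (-1) (exp ℚ) := by
    rw [exp_mul_exp_eq_exp_add]; norm_num
  have h₃ : rescale (1 / 2 : ℚ) (exp ℚ) * rescale (-(1 / 2)) (exp ℚ) = 1 := by
    rw [exp_mul_exp_eq_exp_add]; simp
  have hsq : ((↑(expUnit ℚ (1 / 2)) - ↑(expUnit ℚ (1 / 2))⁻¹) ^ 2 : ℚ⟦X⟧) =
      rescale 1 (exp ℚ) + rescale (-1) (exp ℚ) - C 2 := by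
    simp only [expUnit, Units.inv_mk, map_ofNat]
    linear_combination h₁ + h₂ - 2 * h₃
  refine mk_span_X_pow_eq_iff.2 fun m hm => ?_
  simp only [hsq, map_add, map_sub, coeff_rescale_exp, coeff_C, coeff_X_pow, coeff_C_mul]
  interval_cases m <;> norm_num [Nat.factorial]

theorem mk_aeval_of_mk_sq {N : Polynomial ℚ} (hN0 : N.coeff 0 = 1)
    (hNodd : ∀ m : ℕ, Odd m → N.coeff m = 0) {z : ℚ⟦X⟧}
    (hz : π₆ (z ^ 2) = π₆ (X ^ 2 + C (1 / 12) * X ^ 4)) :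
    π₆ (Polynomial.aeval z N) =
      π₆ (C 1 + C (N.coeff 2) * X ^ 2 + C (N.coeff 2 / 12 + N.coeff 4) * X ^ 4) := by
  have hC : C (N.coeff 2 / 12 + N.coeff 4) = C (N.coeff 2) * C (1 / 12) + C (N.coeff 4) := by
    rw [← map_mul, ← map_add]; congr 1; ring
  have hx : π₆ X ^ 6 = 0 := by rw [← map_pow]; exact Ideal.Quotient.mk_singleton_self _
  have hy : π₆ z ^ 2 = π₆ X ^ 2 + π₆ (C (1 / 12)) * π₆ X ^ 4 := by
    rw [← map_pow, hz, map_add, map_mul, map_pow, map_pow]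
  rw [← Ideal.Quotient.mkₐ_eq_mk ℚ, ← Polynomial.aeval_algHom_apply, Ideal.Quotient.mkₐ_eq_mk, hC]
  simp only [map_add, map_mul, map_pow, map_one]
  generalize π₆ X = x at hx hy ⊢
  generalize π₆ z = y at hy ⊢
  generalize π₆ (C (1 / 12)) = c at hy ⊢
  have hy4 : y ^ 4 = x ^ 4 := by
    linear_combination (y ^ 2 + x ^ 2 + c * x ^ 4) * hy + (2 * c + c ^ 2 * x ^ 2) * hx
  have hy6 : y ^ 6 = 0 := by
    linear_combination (y ^ 4 + y ^ 2 * (x ^ 2 + c * x ^ 4) + (x ^ 2 + c * x ^ 4) ^ 2) * hy +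
      (1 + c * x ^ 2) ^ 3 * hx
  rw [Polynomial.aeval_eq_sum_range_of_pow_eq_zero _ hy6]
  simp only [Finset.sum_range_succ, Finset.sum_range_zero, hN0, hNodd 1 (by decide),
    hNodd 3 (by decide), hNodd 5 (by decide), Algebra.smul_def, ← Ideal.Quotient.mk_algebraMap,
    algebraMap_eq, map_zero, map_one, zero_mul, zero_add, add_zero, pow_zero, one_mul]
  rw [hy4, hy]
  ring

theorem mk_formalLog_of_mk_eq {f : ℚ⟦X⟧} {a b : ℚ}
    (h : π₆ f = π₆ (C 1 + C a * X ^ 2 + C b * X ^ 4)) :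
    π₆ (formalLog f) = π₆ (C 0 + C a * X ^ 2 + C (b - a ^ 2 / 2) * X ^ 4) := by
  have hf : constantCoeff f = 1 := by
    simpa [coeff_C] using mk_span_X_pow_eq_iff.1 h 0 (by norm_num)
  -- the scalar `(-1) ^ (2 + 1) / 2` is the one the `k = 2` term of `formalLog` carries
  have hC : C (b - a ^ 2 / 2) = C b + C ((-1) ^ (2 + 1) / 2) * C a ^ 2 := by
    rw [← map_pow, ← map_mul, ← map_add]; congr 1; ring
  have hx : π₆ X ^ 6 = 0 := by rw [← map_pow]; exact Ideal.Quotient.mk_singleton_self _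
  have hg : π₆ (f - 1) = π₆ (C a) * π₆ X ^ 2 + π₆ (C b) * π₆ X ^ 4 := by
    rw [map_sub, h]; simp only [map_add, map_mul, map_pow, map_one]; ring
  rw [mk_formalLog hf 5, hC, map_sum]
  simp only [map_add, map_mul, map_pow, map_zero, zero_add]
  generalize π₆ (f - 1) = g at hg ⊢
  generalize π₆ X = x at hx hg ⊢
  generalize π₆ (C a) = a' at hg ⊢
  generalize π₆ (C b) = b' at hg ⊢
  have hg2 : g ^ 2 = a' ^ 2 * x ^ 4 := by
    rw [hg]; linear_combination (2 * a' * b' + b' ^ 2 * x ^ 2) * hx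
  have hg3 : g ^ 3 = 0 := by
    rw [hg]; linear_combination (a' + b' * x ^ 2) ^ 3 * hx
  have hsum : ∑ k ∈ Finset.Icc (1 : ℕ) 5, π₆ (C ((-1 : ℚ) ^ (k + 1) / k)) * g ^ k =
      g + π₆ (C ((-1) ^ (2 + 1) / 2)) * g ^ 2 := by
    simp [Finset.sum_Icc_succ_top, pow_eq_zero_of_le _ hg3]
  rw [hsum, hg2]
  linear_combination hg

theorem alexander_expansion_exp_general (d : ℤ →₀ ℚ) (N : Polynomial ℚ)
    (hN0 : N.coeff 0 = 1)
    (hNodd : ∀ m : ℕ, Odd m → N.coeff m = 0)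
    (hconv : ∀ t : ℝ, t ≠ 0 →
      (N.map (algebraMap ℚ ℝ)).eval (t - t⁻¹) = laurentEval d (t ^ 2)) :
    (coeff 0 (laurentExpSeries d) = 1 ∧
     coeff 1 (laurentExpSeries d) = 0 ∧
     coeff 2 (laurentExpSeries d) = N.coeff 2 ∧
     coeff 3 (laurentExpSeries d) = 0 ∧
     coeff 4 (laurentExpSeries d) = N.coeff 2 / 12 + N.coeff 4 ∧
     coeff 5 (laurentExpSeries d) = 0) ∧
    (coeff 0 (formalLog (laurentExpSeries d)) = 0 ∧
     coeff 1 (formalLog (laurentExpSeries d)) = 0 ∧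
     coeff 2 (formalLog (laurentExpSeries d)) = N.coeff 2 ∧
     coeff 3 (formalLog (laurentExpSeries d)) = 0 ∧
     coeff 4 (formalLog (laurentExpSeries d)) =
       N.coeff 2 / 12 - (N.coeff 2) ^ 2 / 2 + N.coeff 4 ∧
     coeff 5 (formalLog (laurentExpSeries d)) = 0) := by
  have hΔ := mk_aeval_of_mk_sq hN0 hNodd mk_sq_expUnit_sub_inv
  rw [← laurentExpSeries_eq_aeval d N hconv] at hΔ
  have hlog := mk_formalLog_of_mk_eq hΔ
  rw [show N.coeff 2 / 12 + N.coeff 4 - N.coeff 2 ^ 2 / 2 =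
    N.coeff 2 / 12 - N.coeff 2 ^ 2 / 2 + N.coeff 4 by ring] at hlog
  exact ⟨coeff_eq_of_mk_eq hΔ, coeff_eq_of_mk_eq hlog⟩

/-- Expansion of the Alexander polynomial at `t = e^h`: if
`Δ(t) = ∑_n d_n t^n` is a symmetric Laurent polynomial with `Δ(1) = 1` and
`∇(z) = 1 + a₂ z² + a₄ z⁴ + (higher even terms)` satisfies `∇(t - t⁻¹) = Δ(t²)`,
then `Δ(e^h) = 1 + a₂ h² + (a₂/12 + a₄) h⁴ + O(h⁶)` and
`log Δ(e^h) = a₂ h² + (a₂/12 - a₂²/2 + a₄) h⁴ + O(h⁶)`, where `O(h⁶)` means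
equality of the coefficients in degrees `0` through `5`. -/
theorem alexander_expansion_exp (d : ℤ →₀ ℚ) (N : Polynomial ℚ)
    (hsym : ∀ n : ℤ, d (-n) = d n)
    (h1 : laurentEval d 1 = 1)
    (hN0 : N.coeff 0 = 1)
    (hNodd : ∀ m : ℕ, Odd m → N.coeff m = 0)
    (hconv : ∀ t : ℝ, t ≠ 0 →
      (N.map (algebraMap ℚ ℝ)).eval (t - t⁻¹) = laurentEval d (t ^ 2)) :
    (coeff 0 (laurentExpSeries d) = 1 ∧
     coeff 1 (laurentExpSeries d) = 0 ∧
     coeff 2 (laurentExpSeries d) = N.coeff 2 ∧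
     coeff 3 (laurentExpSeries d) = 0 ∧
     coeff 4 (laurentExpSeries d) = N.coeff 2 / 12 + N.coeff 4 ∧
     coeff 5 (laurentExpSeries d) = 0) ∧
    (coeff 0 (formalLog (laurentExpSeries d)) = 0 ∧
     coeff 1 (formalLog (laurentExpSeries d)) = 0 ∧
     coeff 2 (formalLog (laurentExpSeries d)) = N.coeff 2 ∧
     coeff 3 (formalLog (laurentExpSeries d)) = 0 ∧
     coeff 4 (formalLog (laurentExpSeries d)) =
       N.coeff 2 / 12 - (N.coeff 2) ^ 2 / 2 + N.coeff 4 ∧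
     coeff 5 (formalLog (laurentExpSeries d)) = 0) :=
  alexander_expansion_exp_general d N hN0 hNodd hconv
end
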